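/- arXiv:2402.07101 — 3 statements merged into one kernel-verified Lean document; each statement's English description precedes it below -/
import Mathlib

section
/- Let g : ℝ^{dx} × ℝ^{dy} → ℝ with g(x,·) μ_g-strongly convex and differentiable in y for each x, and let f : ℝ^{dx} × ℝ^{dy} → ℝ with ‖∇_y f(x,y)‖ ≤ l_{f,0} for all (x,y). Fix λ ≥ 2 l_{f,1}/μ_g and define y*(x) = argmin_y g(x,y) and y*_λ(x) = argmin_y (f(x,y) + λ g(x,y)). Then ‖y*_λ(x) − y*(x)‖ ≤ 2 l_{f,0}/(λ μ_g) for every x. -/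
theorem ylambda_close_to_ystar
    {dx dy : ℕ}
    (f g : EuclideanSpace ℝ (Fin dx) → EuclideanSpace ℝ (Fin dy) → ℝ)
    (gradf gradg : EuclideanSpace ℝ (Fin dx) → EuclideanSpace ℝ (Fin dy) → EuclideanSpace ℝ (Fin dy))
    (μg lf0 lf1 lam : ℝ)
    (hμg : 0 < μg) (hlf0 : 0 < lf0) (hlf1 : 0 < lf1)
    (hlam : lam ≥ 2 * lf1 / μg)
    -- g(x,·) is μg-strongly convex with gradient gradg
    (hgdiff : ∀ x y, HasGradientAt (g x) (gradg x y) y)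
    (hgsc : ∀ x y y', g x y' ≥ g x y + inner ℝ (gradg x y) (y' - y) + (μg/2) * ‖y' - y‖^2)
    -- gradient of f in y with bounded norm
    (hfdiff : ∀ x y, HasGradientAt (f x) (gradf x y) y)
    (hfbd : ∀ x y, ‖gradf x y‖ ≤ lf0)
    (ystar ylam : EuclideanSpace ℝ (Fin dx) → EuclideanSpace ℝ (Fin dy))
    -- y*(x) minimizes g(x,·); y*_λ(x) minimizes f(x,·) + λ g(x,·)
    (hystar : ∀ x y, g x (ystar x) ≤ g x y)
    (hylam : ∀ x y, f x (ylam x) + lam * g x (ylam x) ≤ f x y + lam * g x y)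
    -- first-order optimality condition for y*_λ(x)
    (hfoc : ∀ x, gradf x (ylam x) + lam • gradg x (ylam x) = 0) :
    ∀ x, ‖ylam x - ystar x‖ ≤ 2 * lf0 / (lam * μg) := by
  intro x
  have hlam0 : 0 < lam := lt_of_lt_of_le (by positivity) hlam
  set d := ylam x - ystar x with hd
  have h1 := hgsc x (ylam x) (ystar x)
  have h2 := hystar x (ylam x)
  have hneg : ystar x - ylam x = -d := by simp [hd]
  rw [hneg] at h1
  rw [inner_neg_right, norm_neg] at h1
  have hip : (μg/2) * ‖d‖^2 ≤ inner ℝ (gradg x (ylam x)) d := by linarith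
  have hg2 : lam • gradg x (ylam x) = - gradf x (ylam x) := by
    have h := hfoc x
    exact (neg_eq_of_add_eq_zero_right h).symm
  have key : lam * ((μg/2) * ‖d‖^2) ≤ lf0 * ‖d‖ := by
    calc lam * ((μg/2) * ‖d‖^2) ≤ lam * inner ℝ (gradg x (ylam x)) d :=
          mul_le_mul_of_nonneg_left hip hlam0.le
      _ = inner ℝ (lam • gradg x (ylam x)) d := (real_inner_smul_left _ _ _).symm
      _ = inner ℝ (- gradf x (ylam x) : EuclideanSpace ℝ (Fin dy)) d := by rw [hg2]
      _ ≤ ‖- gradf x (ylam x)‖ * ‖d‖ := real_inner_le_norm _ _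
      _ = ‖gradf x (ylam x)‖ * ‖d‖ := by rw [norm_neg]
      _ ≤ lf0 * ‖d‖ := mul_le_mul_of_nonneg_right (hfbd x _) (norm_nonneg d)
  rcases (norm_nonneg d).eq_or_lt' with h0 | h0
  · rw [h0]; positivity
  · rw [le_div_iff₀ (by positivity)]
    nlinarith [key, h0]
end

section
/- Let f : ℝ^p → ℝ be L-smooth, μ-strongly convex with minimizer x*, and let B ⊆ ℝ^p be a closed convex set containing x*. Let G be a random vector with 𝔼[G] = ∇f(x) and 𝔼[‖G − ∇f(x)‖²] ≤ σ², and let x⁺ = Π_B(x − α·G) for step size α ≤ 2/(μ+L). Then 𝔼[‖x⁺ − x*‖²] ≤ (1 − 2αμL/(μ+L))·‖x − x*‖² + α²σ². -/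
open MeasureTheory
open scoped RealInnerProductSpace

section auxlem
variable {E : Type*} [NormedAddCommGroup E] [InnerProductSpace ℝ E]

lemma proj_sq_contract' (B : Set E) (hBconv : Convex ℝ B)
    (proj : E → E) (hprojB : ∀ y, proj y ∈ B)
    (hprojmin : ∀ y, ∀ z ∈ B, ‖y - proj y‖ ≤ ‖y - z‖)
    (xstar : E) (hxB : xstar ∈ B) (y : E) :
    ‖proj y - xstar‖^2 ≤ ‖y - xstar‖^2 := by
  haveI : Nonempty B := ⟨⟨xstar, hxB⟩⟩
  have hinf : ‖y - proj y‖ = ⨅ w : B, ‖y - (w : E)‖ := by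
    apply le_antisymm
    · exact le_ciInf fun w => hprojmin y w w.2
    · exact ciInf_le ⟨0, by rintro _ ⟨w, rfl⟩; exact norm_nonneg _⟩ (⟨proj y, hprojB y⟩ : B)
  have hvi := (norm_eq_iInf_iff_real_inner_le_zero hBconv (hprojB y)).mp hinf xstar hxB
  have key : (0:ℝ) ≤ ⟪y - proj y, proj y - xstar⟫ := by
    have h2 : proj y - xstar = -(xstar - proj y) := by abel
    rw [h2, inner_neg_right]; linarith
  have hexp : ‖y - xstar‖^2 = ‖y - proj y‖^2 + 2*⟪y - proj y, proj y - xstar⟫ + ‖proj y - xstar‖^2 := by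
    have h3 : y - xstar = (y - proj y) + (proj y - xstar) := by abel
    rw [h3, norm_add_sq_real]
  nlinarith [sq_nonneg ‖y - proj y‖]

set_option maxHeartbeats 1000000 in
lemma cocoercive' (f : E → ℝ) (g : E → E) (μ L : ℝ) (hμ : 0 < μ) (hL : 0 < L) (hμL : μ ≤ L)
    (hsc : ∀ x y, f y ≥ f x + ⟪g x, y - x⟫ + (μ/2)*‖y - x‖^2)
    (hsm : ∀ x y, f y ≤ f x + ⟪g x, y - x⟫ + (L/2)*‖y - x‖^2)
    (xstar : E) (hg0 : g xstar = 0) (x : E) :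
    μ*L/(μ+L)*‖x - xstar‖^2 + 1/(μ+L)*‖g x‖^2 ≤ ⟪g x, x - xstar⟫ := by
  set d := x - xstar with hd
  set u := g x - μ • d with hu
  have hgx : g x = u + μ • d := by rw [hu]; abel
  have hgu : ⟪g x, u⟫ = ‖u‖^2 + μ * ⟪u, d⟫ := by
    rw [hgx, inner_add_left, real_inner_smul_left, real_inner_self_eq_norm_sq,
      real_inner_comm u d]
  have hgd : ⟪g x, d⟫ = ⟪u, d⟫ + μ * ‖d‖^2 := by
    rw [hgx, inner_add_left, real_inner_smul_left, real_inner_self_eq_norm_sq]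
  have hgn : ‖g x‖^2 = ‖u‖^2 + 2*μ*⟪u, d⟫ + μ^2*‖d‖^2 := by
    rw [hgx, norm_add_sq_real, real_inner_smul_right, norm_smul, mul_pow,
      Real.norm_eq_abs, sq_abs]
    ring
  -- key family of inequalities
  have hF : ∀ t : ℝ, 2*t*‖u‖^2 - (L-μ)*t^2*‖u‖^2 ≤ ⟪u, d⟫ := by
    intro t
    have hA1 := hsc x (xstar + t • u)
    have hA2 := hsm xstar (xstar + t • u)
    have hB1 := hsc xstar (x - t • u)
    have hB2 := hsm x (x - t • u)
    have e1 : xstar + t • u - x = t • u - d := by rw [hd]; abel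
    have e2 : xstar + t • u - xstar = t • u := by abel
    have e3 : x - t • u - xstar = d - t • u := by rw [hd]; abel
    have e4 : x - t • u - x = -(t • u) := by abel
    rw [e1] at hA1
    rw [e2, hg0] at hA2
    rw [e3, hg0] at hB1
    rw [e4] at hB2
    have n1 : ‖t • u - d‖^2 = t^2*‖u‖^2 - 2*t*⟪u, d⟫ + ‖d‖^2 := by
      rw [norm_sub_sq_real, real_inner_smul_left, norm_smul, mul_pow,
        Real.norm_eq_abs, sq_abs]
      ring
    have n2 : ‖t • u‖^2 = t^2*‖u‖^2 := by
      rw [norm_smul, mul_pow, Real.norm_eq_abs, sq_abs]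
    have n3 : ‖d - t • u‖^2 = ‖d‖^2 - 2*t*⟪u, d⟫ + t^2*‖u‖^2 := by
      rw [norm_sub_sq_real, real_inner_smul_right, norm_smul, mul_pow,
        Real.norm_eq_abs, sq_abs, real_inner_comm u d]
      ring
    have n4 : ‖-(t • u)‖^2 = t^2*‖u‖^2 := by
      rw [norm_neg, norm_smul, mul_pow, Real.norm_eq_abs, sq_abs]
    have i1 : ⟪g x, t • u - d⟫ = t*(‖u‖^2 + μ*⟪u, d⟫) - (⟪u, d⟫ + μ*‖d‖^2) := by
      rw [inner_sub_right, real_inner_smul_right, hgu, hgd]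
    have i2 : ⟪(0:E), t • u⟫ = (0:ℝ) := inner_zero_left _
    have i3 : ⟪(0:E), d - t • u⟫ = (0:ℝ) := inner_zero_left _
    have i4 : ⟪g x, -(t • u)⟫ = -(t*(‖u‖^2 + μ*⟪u, d⟫)) := by
      rw [inner_neg_right, real_inner_smul_right, hgu]
    rw [i1, n1] at hA1
    rw [i2, n2] at hA2
    rw [i3, n3] at hB1
    rw [i4, n4] at hB2
    linarith [hA1, hA2, hB1, hB2]
  -- abstract to scalars
  obtain ⟨U, hU⟩ : ∃ U : ℝ, U = ‖u‖^2 := ⟨_, rfl⟩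
  obtain ⟨D, hD⟩ : ∃ D : ℝ, D = ‖d‖^2 := ⟨_, rfl⟩
  obtain ⟨P, hP⟩ : ∃ P : ℝ, P = ⟪u, d⟫ := ⟨_, rfl⟩
  rw [hgd, hgn, ← hU, ← hD, ← hP]
  rw [← hU, ← hP] at hF
  have hUnn : 0 ≤ U := hU ▸ sq_nonneg _
  have key : U ≤ (L - μ) * P := by
    rcases eq_or_lt_of_le hμL with heq | hlt
    · have h0 : L - μ = 0 := by rw [← heq]; ring
      have hFt : ∀ t : ℝ, 2*t*U ≤ P := by
        intro t
        have := hF t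
        rw [h0] at this
        nlinarith [this]
      have hU0 : U ≤ 0 := by
        by_contra hpos
        push_neg at hpos
        have e : 2 * ((P + 1) / (2 * U)) * U = P + 1 := by
          field_simp
        have := hFt ((P + 1) / (2 * U))
        rw [e] at this
        linarith
      have : U = 0 := le_antisymm hU0 hUnn
      rw [this, h0, zero_mul]
    · have hLM : (0:ℝ) < L - μ := by linarith
      have h1 := hF (1 / (L - μ))
      have h2 : 2*(1/(L-μ))*U - (L-μ)*(1/(L-μ))^2*U = U/(L-μ) := by
        field_simp
        ring
      rw [h2] at h1
      rw [div_le_iff₀ hLM] at h1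
      nlinarith [h1]
  have hμL' : (0:ℝ) < μ + L := by linarith
  rw [show μ*L/(μ+L)*D + 1/(μ+L)*(U + 2*μ*P + μ^2*D)
      = (μ*L*D + (U + 2*μ*P + μ^2*D))/(μ+L) by ring, div_le_iff₀ hμL']
  linarith [key]

end auxlem

set_option maxHeartbeats 1000000

open scoped RealInnerProductSpace in
theorem projected_sgd_contraction
    {p : ℕ} {Ω : Type*} [MeasureSpace Ω] (μmeas : Measure Ω) [IsProbabilityMeasure μmeas]
    (f : EuclideanSpace ℝ (Fin p) → ℝ)
    (gradf : EuclideanSpace ℝ (Fin p) → EuclideanSpace ℝ (Fin p))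
    (μ L α σ : ℝ) (hμ : 0 < μ) (hL : 0 < L) (hμL : μ ≤ L)
    (hα : 0 < α) (hαle : α ≤ 2 / (μ + L)) (hσ : 0 ≤ σ)
    (hdiff : ∀ x, HasGradientAt f (gradf x) x)
    -- μ-strong convexity
    (hsc : ∀ x y, f y ≥ f x + inner ℝ (gradf x) (y - x) + (μ/2) * ‖y - x‖^2)
    -- L-smoothness
    (hsmooth : ∀ x y, f y ≤ f x + inner ℝ (gradf x) (y - x) + (L/2) * ‖y - x‖^2)
    (B : Set (EuclideanSpace ℝ (Fin p))) (hBclosed : IsClosed B) (hBconv : Convex ℝ B)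
    (xstar : EuclideanSpace ℝ (Fin p)) (hxstarB : xstar ∈ B)
    (hmin : ∀ y, f xstar ≤ f y)
    -- Euclidean projection onto B
    (proj : EuclideanSpace ℝ (Fin p) → EuclideanSpace ℝ (Fin p))
    (hprojB : ∀ y, proj y ∈ B)
    (hprojmin : ∀ y, ∀ z ∈ B, ‖y - proj y‖ ≤ ‖y - z‖)
    (x : EuclideanSpace ℝ (Fin p))
    (G : Ω → EuclideanSpace ℝ (Fin p))
    (hGint : Integrable G μmeas)
    (hGmean : ∫ ω, G ω ∂μmeas = gradf x)
    (hGvarint : Integrable (fun ω => ‖G ω - gradf x‖^2) μmeas)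
    (hGvar : ∫ ω, ‖G ω - gradf x‖^2 ∂μmeas ≤ σ^2)
    (hint : Integrable (fun ω => ‖proj (x - α • G ω) - xstar‖^2) μmeas) :
    ∫ ω, ‖proj (x - α • G ω) - xstar‖^2 ∂μmeas ≤
      (1 - 2 * α * μ * L / (μ + L)) * ‖x - xstar‖^2 + α^2 * σ^2 := by
  set g : EuclideanSpace ℝ (Fin p) := gradf x with hg
  -- gradient at the minimizer is zero
  have hg0 : gradf xstar = 0 := by
    by_contra hne
    have hgn : (0:ℝ) < ‖gradf xstar‖^2 := pow_pos (norm_pos_iff.mpr hne) 2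
    have h1 := hsmooth xstar (xstar - (1/L) • gradf xstar)
    have h2 := hmin (xstar - (1/L) • gradf xstar)
    have e1 : xstar - (1/L) • gradf xstar - xstar = -((1/L) • gradf xstar) := by abel
    rw [e1, inner_neg_right, real_inner_smul_right, real_inner_self_eq_norm_sq,
      norm_neg, norm_smul, mul_pow, Real.norm_eq_abs, sq_abs] at h1
    have ht : (0:ℝ) < 1/L := by positivity
    have e2 : L/2*((1/L)^2*‖gradf xstar‖^2) = (1/L)/2*‖gradf xstar‖^2 := by
      field_simp
    rw [e2] at h1
    nlinarith [mul_pos ht hgn, h1, h2]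
  -- co-coercivity
  have hco : μ*L/(μ+L)*‖x - xstar‖^2 + 1/(μ+L)*‖g‖^2 ≤ ⟪g, x - xstar⟫ :=
    cocoercive' f gradf μ L hμ hL hμL hsc hsmooth xstar hg0 x
  set v : EuclideanSpace ℝ (Fin p) := x - α • g - xstar with hv
  -- pointwise expansion
  have hpt : ∀ ω, ‖x - α • G ω - xstar‖^2
      = ‖v‖^2 - 2*α*⟪v, G ω - g⟫ + α^2*‖G ω - g‖^2 := by
    intro ω
    have e : x - α • G ω - xstar = v - α • (G ω - g) := by
      rw [hv, smul_sub]; abel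
    rw [e, norm_sub_sq_real, real_inner_smul_right, norm_smul, mul_pow,
      Real.norm_eq_abs, sq_abs]
    ring
  have hsubint : Integrable (fun ω => G ω - g) μmeas := hGint.sub (integrable_const g)
  have hI1 : Integrable (fun ω => ⟪v, G ω - g⟫) μmeas := hsubint.const_inner v
  have hI2 : Integrable (fun ω => ‖v‖^2 - 2*α*⟪v, G ω - g⟫) μmeas :=
    (integrable_const _).sub (hI1.const_mul _)
  have hI3 : Integrable (fun ω => α^2*‖G ω - g‖^2) μmeas := hGvarint.const_mul _
  have hIrhs : Integrable (fun ω => ‖x - α • G ω - xstar‖^2) μmeas := by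
    have : (fun ω => ‖x - α • G ω - xstar‖^2)
        = fun ω => ‖v‖^2 - 2*α*⟪v, G ω - g⟫ + α^2*‖G ω - g‖^2 := funext hpt
    rw [this]
    exact hI2.add hI3
  have hmono : ∫ ω, ‖proj (x - α • G ω) - xstar‖^2 ∂μmeas
      ≤ ∫ ω, ‖x - α • G ω - xstar‖^2 ∂μmeas := by
    apply integral_mono hint hIrhs
    intro ω
    exact proj_sq_contract' B hBconv proj hprojB hprojmin xstar hxstarB _
  have hzero : ∫ ω, ⟪v, G ω - g⟫ ∂μmeas = 0 := by
    rw [integral_inner hsubint v]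
    have hGg : ∫ ω, (G ω - g) ∂μmeas = 0 := by
      rw [integral_sub hGint (integrable_const g), hGmean, integral_const]
      simp
    rw [hGg, inner_zero_right]
  have hsplit : ∫ ω, ‖x - α • G ω - xstar‖^2 ∂μmeas
      = ‖v‖^2 + α^2 * ∫ ω, ‖G ω - g‖^2 ∂μmeas := by
    simp_rw [hpt]
    rw [integral_add hI2 hI3, integral_sub (integrable_const _) (hI1.const_mul (2*α)),
      integral_const, integral_const_mul, integral_const_mul, hzero]
    simp
  have hvar : α^2 * ∫ ω, ‖G ω - g‖^2 ∂μmeas ≤ α^2 * σ^2 := by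
    apply mul_le_mul_of_nonneg_left hGvar (sq_nonneg α)
  -- deterministic contraction
  have hdet : ‖v‖^2 ≤ (1 - 2 * α * μ * L / (μ + L)) * ‖x - xstar‖^2 := by
    have hμL' : (0:ℝ) < μ + L := by linarith
    have hvexp : ‖v‖^2 = ‖x - xstar‖^2 - 2*α*⟪g, x - xstar⟫ + α^2*‖g‖^2 := by
      have e : v = (x - xstar) - α • g := by rw [hv]; abel
      rw [e, norm_sub_sq_real, real_inner_smul_right, norm_smul, mul_pow,
        Real.norm_eq_abs, sq_abs, real_inner_comm (x - xstar) g]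
      ring
    have hα2 : α^2*(μ+L) ≤ 2*α := by
      have := (le_div_iff₀ hμL').mp hαle
      nlinarith
    rw [hvexp]
    rw [show (1 - 2 * α * μ * L / (μ + L)) * ‖x - xstar‖^2
        = ‖x - xstar‖^2 - 2*α*(μ*L/(μ+L)*‖x - xstar‖^2) by ring]
    have h3 : α^2*‖g‖^2 ≤ 2*α*(1/(μ+L)*‖g‖^2) := by
      rw [show 2*α*(1/(μ+L)*‖g‖^2) = (2*α)*‖g‖^2/(μ+L) by ring, le_div_iff₀ hμL']
      nlinarith [sq_nonneg ‖g‖]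
    have h4 := mul_le_mul_of_nonneg_left hco (le_of_lt hα)
    linarith [h3, h4]
  calc ∫ ω, ‖proj (x - α • G ω) - xstar‖^2 ∂μmeas
      ≤ ∫ ω, ‖x - α • G ω - xstar‖^2 ∂μmeas := hmono
    _ = ‖v‖^2 + α^2 * ∫ ω, ‖G ω - g‖^2 ∂μmeas := hsplit
    _ ≤ ‖v‖^2 + α^2 * σ^2 := by linarith
    _ ≤ (1 - 2 * α * μ * L / (μ + L)) * ‖x - xstar‖^2 + α^2 * σ^2 := by linarith
end

section
/- Let L : ℝ^{dx} → ℝ be L₀-smooth and consider one step x⁺ = x − α·Ĝ with 0 < α < 1/(2L₀), where Ĝ is a random vector. Then 𝔼[L(x⁺)] − L(x) ≤ −(α/2)‖∇L(x)‖² − (α/4)𝔼[‖Ĝ‖²] + α·𝔼[‖Ĝ − G‖²] + α·‖∇L(x) − G‖², where G = 𝔼[Ĝ]. -/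
open MeasureTheory

theorem biased_sgd_descent_lemma
    {dx : ℕ} {Ω : Type*} [MeasureSpace Ω] (μ : Measure Ω) [IsProbabilityMeasure μ]
    (L : EuclideanSpace ℝ (Fin dx) → ℝ)
    (gradL : EuclideanSpace ℝ (Fin dx) → EuclideanSpace ℝ (Fin dx))
    (L₀ α : ℝ) (hL₀ : 0 < L₀) (hα : 0 < α) (hα' : α < 1 / (2 * L₀))
    (hdiff : ∀ x, HasGradientAt L (gradL x) x)
    (hsmooth : ∀ x y, L y ≤ L x + inner ℝ (gradL x) (y - x) + (L₀/2) * ‖y - x‖^2)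
    (x : EuclideanSpace ℝ (Fin dx))
    (Ghat : Ω → EuclideanSpace ℝ (Fin dx))
    (G : EuclideanSpace ℝ (Fin dx))
    (hGint : Integrable Ghat μ)
    (hGmean : ∫ ω, Ghat ω ∂μ = G)
    (hnorm2int : Integrable (fun ω => ‖Ghat ω‖^2) μ)
    (hvarint : Integrable (fun ω => ‖Ghat ω - G‖^2) μ)
    (hLint : Integrable (fun ω => L (x - α • Ghat ω)) μ) :
    (∫ ω, L (x - α • Ghat ω) ∂μ) - L x ≤
      -(α/2) * ‖gradL x‖^2 - (α/4) * ∫ ω, ‖Ghat ω‖^2 ∂μ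
        + α * ∫ ω, ‖Ghat ω - G‖^2 ∂μ + α * ‖gradL x - G‖^2 := by
  set g := gradL x with hg
  set c : ℝ := L x + (-(α/2) * ‖g‖^2 + α * ‖g - G‖^2) with hc
  have hαL : L₀ * α < 1/2 := by
    have h2L : (0:ℝ) < 2 * L₀ := by linarith
    have := (lt_div_iff₀ h2L).mp hα'
    nlinarith
  have key : ∀ ω, L (x - α • Ghat ω) ≤
      c + (-(α/4)) * ‖Ghat ω‖^2 + α * ‖Ghat ω - G‖^2 := by
    intro ω
    set v := Ghat ω with hv
    have hs := hsmooth x (x - α • v)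
    have h1 : x - α • v - x = -(α • v) := by abel
    rw [h1] at hs
    have hinner : (inner ℝ g (-(α • v)) : ℝ) = -(α * inner ℝ g v) := by
      rw [inner_neg_right, real_inner_smul_right]
    have hnormsq : ‖-(α • v)‖^2 = α^2 * ‖v‖^2 := by
      rw [norm_neg, norm_smul]
      rw [mul_pow, Real.norm_eq_abs, sq_abs]
    rw [hinner, hnormsq] at hs
    have hid : ‖g - v‖ ^ 2 = ‖g‖ ^ 2 - 2 * inner ℝ g v + ‖v‖ ^ 2 :=
      norm_sub_sq_real g v
    have htri : ‖g - v‖ ≤ ‖g - G‖ + ‖v - G‖ := by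
      have h2 : g - v = (g - G) - (v - G) := by abel
      rw [h2]; exact norm_sub_le _ _
    have hyoung : ‖g - v‖^2 ≤ 2 * ‖g - G‖^2 + 2 * ‖v - G‖^2 := by
      nlinarith [norm_nonneg (g - v), norm_nonneg (g - G), norm_nonneg (v - G),
        sq_nonneg (‖g - G‖ - ‖v - G‖)]
    have hvnn : (0:ℝ) ≤ ‖v‖^2 := sq_nonneg _
    simp only [hc]
    nlinarith [mul_nonneg hα.le hvnn]
  have hint1 : Integrable (fun ω => c + (-(α/4)) * ‖Ghat ω‖^2) μ :=
    (integrable_const c).add (hnorm2int.const_mul _)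
  have hint_rhs : Integrable
      (fun ω => c + (-(α/4)) * ‖Ghat ω‖^2 + α * ‖Ghat ω - G‖^2) μ :=
    hint1.add (hvarint.const_mul _)
  have hmono : (∫ ω, L (x - α • Ghat ω) ∂μ) ≤
      ∫ ω, (c + (-(α/4)) * ‖Ghat ω‖^2 + α * ‖Ghat ω - G‖^2) ∂μ :=
    integral_mono hLint hint_rhs key
  have hcalc : (∫ ω, (c + (-(α/4)) * ‖Ghat ω‖^2 + α * ‖Ghat ω - G‖^2) ∂μ)
      = c + (-(α/4)) * (∫ ω, ‖Ghat ω‖^2 ∂μ) + α * (∫ ω, ‖Ghat ω - G‖^2 ∂μ) := by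
    rw [integral_add hint1 (hvarint.const_mul _),
      integral_add (integrable_const c) (hnorm2int.const_mul _),
      integral_const, integral_const_mul, integral_const_mul]
    simp
  rw [hcalc] at hmono
  simp only [hc] at hmono
  linarith
end
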